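/- Let A be a real symmetric positive definite d×d matrix with positive semidefinite square root A^{1/2}, let b ∈ ℝ^d, and let F(x) = (1/2)·xᵀAx − bᵀx, so ∇F(x) = Ax − b. Let 0 < π < 1, let H be a real symmetric positive definite d×d matrix satisfying (1 − π)·A⁻¹ ⪯ H⁻¹ ⪯ A⁻¹ in the Loewner order, and set θ = (1 − √(1 − π))/(1 + √(1 − π)). From arbitrary initial points x⁽⁰⁾, x⁽¹⁾ ∈ ℝ^d define the sequence y⁽ᵗ⁺¹⁾ = (1+θ)·x⁽ᵗ⁾ − θ·x⁽ᵗ⁻¹⁾, x⁽ᵗ⁺¹⁾ = y⁽ᵗ⁺¹⁾ − H⁻¹∇F(y⁽ᵗ⁺¹⁾) for t ≥ 1. Then for every ρ with 1 − √(1 − π) < ρ < 1 there exists a constant C > 0 such that for all t ≥ 1, √( ‖A^{-1/2}∇F(x⁽ᵗ⁺¹⁾)‖² + ‖A^{-1/2}∇F(x⁽ᵗ⁾)‖² ) ≤ C·ρᵗ·√( ‖A^{-1/2}∇F(x⁽¹⁾)‖² + ‖A^{-1/2}∇F(x⁽⁰⁾)‖² ). -/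

import Mathlib

/-!
In the coordinates `g = A^{-1/2} ∇F(x)` the iteration becomes the linear momentum recurrence
`g⁽ᵗ⁺¹⁾ = M ((1 + θ) g⁽ᵗ⁾ - θ g⁽ᵗ⁻¹⁾)` with `M = 1 - A^{1/2} H⁻¹ A^{1/2}`, and the Loewner bounds on
`H⁻¹` say exactly `0 ⪯ M ⪯ π`. In an eigenbasis of `M` every coordinate solves a scalar recurrence
`aₙ₊₂ = (1 + θ) μ aₙ₊₁ - θ μ aₙ` with `μ ∈ [0, π]`. The choice of `θ` makes its characteristic
roots complex conjugate (or double) of modulus `√(θ μ) ≤ 1 - √(1 - π)`, and a two-step recurrence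
whose roots have modulus at most `r` decays like `ρⁿ` for every `ρ > r`.
-/

open Matrix
open scoped BigOperators

/-- The square root of a positive semidefinite matrix, as defined in the older Mathlib
(removed since). -/
noncomputable def Matrix.PosSemidef.sqrt {n : Type*} [Fintype n] [DecidableEq n]
    {A : Matrix n n ℝ} (hA : A.PosSemidef) : Matrix n n ℝ :=
  hA.1.eigenvectorUnitary.1 * diagonal (Real.sqrt ∘ hA.1.eigenvalues) *
    (star hA.1.eigenvectorUnitary : Matrix n n ℝ)

/-- Squared Euclidean norm of a vector. -/
noncomputable def enormSq {d : ℕ} (v : Fin d → ℝ) : ℝ := ∑ i, (v i) ^ 2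

theorem Matrix.PosSemidef.posSemidef_sqrt {n : Type*} [Fintype n] [DecidableEq n]
    {A : Matrix n n ℝ} (hA : A.PosSemidef) : hA.sqrt.PosSemidef := by
  unfold Matrix.PosSemidef.sqrt
  have hD : (diagonal (Real.sqrt ∘ hA.1.eigenvalues)).PosSemidef :=
    posSemidef_diagonal_iff.mpr fun i => Real.sqrt_nonneg _
  exact hD.mul_mul_conjTranspose_same (hA.1.eigenvectorUnitary : Matrix n n ℝ)

theorem Matrix.PosSemidef.sqrt_mul_self {n : Type*} [Fintype n] [DecidableEq n]
    {A : Matrix n n ℝ} (hA : A.PosSemidef) : hA.sqrt * hA.sqrt = A := by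
  have hUU : (star hA.1.eigenvectorUnitary : Matrix n n ℝ) *
      (hA.1.eigenvectorUnitary : Matrix n n ℝ) = 1 := Unitary.coe_star_mul_self _
  have hspec := hA.1.spectral_theorem
  rw [Unitary.conjStarAlgAut_apply] at hspec
  have hd : diagonal (Real.sqrt ∘ hA.1.eigenvalues) * diagonal (Real.sqrt ∘ hA.1.eigenvalues)
      = diagonal (RCLike.ofReal ∘ hA.1.eigenvalues) := by
    rw [diagonal_mul_diagonal]; congr 1; funext i
    simp only [Function.comp_apply]
    rw [Real.mul_self_sqrt (hA.eigenvalues_nonneg i)]; rfl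
  unfold Matrix.PosSemidef.sqrt
  conv_rhs => rw [hspec]
  simp only [Matrix.mul_assoc]
  rw [← Matrix.mul_assoc (star hA.1.eigenvectorUnitary : Matrix n n ℝ), hUU, Matrix.one_mul,
    ← Matrix.mul_assoc (diagonal _), hd]

theorem norm_le_of_two_step_recurrence {𝕜 E : Type*} [NormedField 𝕜] [SeminormedAddCommGroup E]
    [NormedSpace 𝕜 E] {z w : 𝕜} {r ρ : ℝ} (hz : ‖z‖ ≤ r) (hw : ‖w‖ ≤ r) (hrρ : r < ρ)
    {a : ℕ → E} (ha : ∀ n, a (n + 2) = (z + w) • a (n + 1) - (z * w) • a n) (n : ℕ) :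
    ‖a n‖ ≤ ρ ^ n * ((ρ * ‖a 0‖ + ‖a 1‖) / (ρ - r)) := by
  have hr : 0 ≤ r := (norm_nonneg z).trans hz
  have hρr : 0 < ρ - r := sub_pos.2 hrρ
  have hgeom : ∀ n, a (n + 1) - w • a n = z ^ n • (a 1 - w • a 0) := by
    intro n
    induction n with
    | zero => simp
    | succ n ih => rw [pow_succ', mul_smul, ← ih, ha]; module
  set K := (ρ * ‖a 0‖ + ‖a 1‖) / (ρ - r)
  have hK : (ρ - r) * K = ρ * ‖a 0‖ + ‖a 1‖ := mul_div_cancel₀ _ hρr.ne'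
  have hstart : ‖a 1 - w • a 0‖ ≤ (ρ - r) * K := by
    rw [hK]
    calc ‖a 1 - w • a 0‖ ≤ ‖a 1‖ + ‖w‖ * ‖a 0‖ := (norm_sub_le _ _).trans_eq (by rw [norm_smul])
      _ ≤ ρ * ‖a 0‖ + ‖a 1‖ := by nlinarith [norm_nonneg (a 0)]
  induction n with
  | zero => nlinarith [norm_nonneg (a 0), norm_nonneg (a 1)]
  | succ n ih =>
    have hzn : ‖z ^ n‖ ≤ ρ ^ n := by
      rw [norm_pow]; exact pow_le_pow_left₀ (norm_nonneg z) (hz.trans hrρ.le) n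
    calc ‖a (n + 1)‖ = ‖w • a n + z ^ n • (a 1 - w • a 0)‖ := by rw [← hgeom]; simp
      _ ≤ r * (ρ ^ n * K) + ρ ^ n * ((ρ - r) * K) := by
        refine norm_add_le_of_le ?_ ?_ <;> rw [norm_smul]
        · exact mul_le_mul hw ih (norm_nonneg _) hr
        · exact mul_le_mul hzn hstart (norm_nonneg _) (pow_nonneg (hr.trans hrρ.le) n)
      _ = ρ ^ (n + 1) * K := by ring

theorem abs_le_of_two_step_recurrence {p q r ρ : ℝ} (hdisc : p ^ 2 ≤ 4 * q) (hq : q ≤ r ^ 2)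
    (hr : 0 ≤ r) (hrρ : r < ρ) {a : ℕ → ℝ} (ha : ∀ n, a (n + 2) = p * a (n + 1) - q * a n)
    (n : ℕ) : |a n| ≤ ρ ^ n * ((ρ * |a 0| + |a 1|) / (ρ - r)) := by
  -- `z` and `z̄` are the roots of `X² - p X + q`, whose discriminant is `≤ 0`
  set z : ℂ := ⟨p / 2, √(q - (p / 2) ^ 2)⟩
  have hnormSq : Complex.normSq z = q := by
    rw [Complex.normSq_mk, ← sq, ← sq, Real.sq_sqrt (by linarith)]; ring
  have hsum : z + (starRingEnd ℂ) z = p := by rw [Complex.add_conj]; push_cast [z]; ring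
  have hprod : z * (starRingEnd ℂ) z = q := by rw [Complex.mul_conj, hnormSq]
  have hz : ‖z‖ ≤ r := by
    rw [Complex.norm_def, hnormSq]; exact Real.sqrt_le_iff.2 ⟨hr, hq⟩
  have hz' : ‖(starRingEnd ℂ) z‖ ≤ r := by rwa [Complex.norm_conj]
  have ha' : ∀ n, (a (n + 2) : ℂ) = (z + (starRingEnd ℂ) z) • (a (n + 1) : ℂ) -
      (z * (starRingEnd ℂ) z) • (a n : ℂ) := by
    intro n; rw [hsum, hprod, ha]; push_cast; rfl
  simpa using norm_le_of_two_step_recurrence (a := fun n ↦ (a n : ℂ)) hz hz' hrρ ha' n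

theorem sq_add_sq_le_of_two_step_recurrence {p q r ρ : ℝ} (hdisc : p ^ 2 ≤ 4 * q) (hq : q ≤ r ^ 2)
    (hr : 0 ≤ r) (hrρ : r < ρ) (hρ : ρ ≤ 1) {a : ℕ → ℝ}
    (ha : ∀ n, a (n + 2) = p * a (n + 1) - q * a n) (t : ℕ) :
    a (t + 1) ^ 2 + a t ^ 2 ≤ (2 / (ρ - r) * ρ ^ t) ^ 2 * (a 1 ^ 2 + a 0 ^ 2) := by
  have hρr : 0 < ρ - r := sub_pos.2 hrρ
  have hρ0 : 0 ≤ ρ := hr.trans hrρ.le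
  set B := ρ ^ t * ((|a 0| + |a 1|) / (ρ - r))
  have hbound : ∀ n, t ≤ n → |a n| ≤ B := by
    intro n hn
    refine (abs_le_of_two_step_recurrence hdisc hq hr hrρ ha n).trans (mul_le_mul ?_ ?_ ?_ ?_)
    · exact pow_le_pow_of_le_one hρ0 hρ hn
    · gcongr; nlinarith [abs_nonneg (a 0)]
    · positivity
    · positivity
  have h1 : a (t + 1) ^ 2 ≤ B ^ 2 := sq_le_sq.2 ((hbound _ t.le_succ).trans (le_abs_self B))
  have h2 : a t ^ 2 ≤ B ^ 2 := sq_le_sq.2 ((hbound t le_rfl).trans (le_abs_self B))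
  have h3 : (|a 0| + |a 1|) ^ 2 ≤ 2 * (a 1 ^ 2 + a 0 ^ 2) := by
    nlinarith [sq_abs (a 0), sq_abs (a 1), sq_nonneg (|a 0| - |a 1|)]
  calc a (t + 1) ^ 2 + a t ^ 2 ≤ 2 * B ^ 2 := by linarith
    _ = 2 * (ρ ^ t / (ρ - r)) ^ 2 * (|a 0| + |a 1|) ^ 2 := by ring
    _ ≤ 2 * (ρ ^ t / (ρ - r)) ^ 2 * (2 * (a 1 ^ 2 + a 0 ^ 2)) := by gcongr
    _ = (2 / (ρ - r) * ρ ^ t) ^ 2 * (a 1 ^ 2 + a 0 ^ 2) := by ring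

open scoped ComplexOrder

namespace Matrix.IsHermitian

variable {𝕜 n : Type*} [RCLike 𝕜] [Fintype n] [DecidableEq n] {M : Matrix n n 𝕜}

theorem eigenvalues_le (hM : M.IsHermitian) {c : ℝ} (h : (c • 1 - M).PosSemidef) (i : n) :
    hM.eigenvalues i ≤ c := by
  set v := ⇑(hM.eigenvectorBasis i)
  have hv : star v ⬝ᵥ v = 1 := by
    rw [dotProduct_comm, ← EuclideanSpace.inner_eq_star_dotProduct]
    simp [hM.eigenvectorBasis.orthonormal.1 i]
  have hnonneg := h.re_dotProduct_nonneg v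
  rw [sub_mulVec, mulVec_eigenvectorBasis, smul_mulVec, one_mulVec, dotProduct_sub,
    dotProduct_smul, dotProduct_smul, hv] at hnonneg
  simpa [RCLike.smul_re] using hnonneg

theorem star_eigenvectorUnitary_mulVec_mulVec (hM : M.IsHermitian) (v : n → 𝕜) :
    (star (hM.eigenvectorUnitary : Matrix n n 𝕜)) *ᵥ (M *ᵥ v) =
      diagonal (RCLike.ofReal ∘ hM.eigenvalues) *ᵥ
        (star (hM.eigenvectorUnitary : Matrix n n 𝕜) *ᵥ v) := by
  have h := hM.conjStarAlgAut_star_eigenvectorUnitary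
  rw [Unitary.conjStarAlgAut_star_apply] at h
  rw [mulVec_mulVec, mulVec_mulVec, ← h, Matrix.mul_assoc, Matrix.mul_assoc,
    hM.eigenvectorUnitary.2.2, Matrix.mul_one]

end Matrix.IsHermitian

section Preconditioning

variable {R n : Type*} [CommRing R] [Fintype n] [DecidableEq n] {A S P : Matrix n n R}

theorem isUnit_det_of_mul_self_eq (hSA : S * S = A) (hA : IsUnit A.det) : IsUnit S.det :=
  isUnit_of_mul_isUnit_left (by rwa [← det_mul, hSA])

theorem mul_inv_mul_eq_one_of_mul_self_eq (hSA : S * S = A) (hA : IsUnit A.det) :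
    S * A⁻¹ * S = 1 := by
  have hS := isUnit_det_of_mul_self_eq hSA hA
  rw [← hSA, Matrix.mul_inv_rev, ← Matrix.mul_assoc, mul_nonsing_inv _ hS, Matrix.one_mul,
    nonsing_inv_mul _ hS]

theorem inv_mulVec_residual_preconditioned_step (hSA : S * S = A) (hA : IsUnit A.det)
    (b y : n → R) :
    S⁻¹ *ᵥ (A *ᵥ (y - P *ᵥ (A *ᵥ y - b)) - b) = (1 - S * P * S) *ᵥ (S⁻¹ *ᵥ (A *ᵥ y - b)) := by
  have hS := isUnit_det_of_mul_self_eq hSA hA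
  have hSA' : S⁻¹ * A = S := by
    rw [← hSA, ← Matrix.mul_assoc, nonsing_inv_mul _ hS, Matrix.one_mul]
  have hstep : A *ᵥ (y - P *ᵥ (A *ᵥ y - b)) - b =
      (A *ᵥ y - b) - A *ᵥ (P *ᵥ (A *ᵥ y - b)) := by
    rw [mulVec_sub]; abel
  rw [hstep, mulVec_sub, sub_mulVec, one_mulVec, mulVec_mulVec, mulVec_mulVec, mulVec_mulVec,
    hSA', Matrix.mul_assoc (S * P), mul_nonsing_inv _ hS, Matrix.mul_one]

theorem preconditioned_residual_recurrence (hSA : S * S = A) (hA : IsUnit A.det) (b : n → R)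
    {θ : R} {x : ℕ → n → R}
    (hx : ∀ k, x (k + 2) = ((1 + θ) • x (k + 1) - θ • x k) -
      P *ᵥ (A *ᵥ ((1 + θ) • x (k + 1) - θ • x k) - b)) (k : ℕ) :
    S⁻¹ *ᵥ (A *ᵥ x (k + 2) - b) = (1 - S * P * S) *ᵥ
      ((1 + θ) • (S⁻¹ *ᵥ (A *ᵥ x (k + 1) - b)) - θ • (S⁻¹ *ᵥ (A *ᵥ x k - b))) := by
  rw [hx, inv_mulVec_residual_preconditioned_step hSA hA]
  congr 1
  simp only [mulVec_sub, mulVec_smul]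
  module

variable [PartialOrder R] [StarRing R]

theorem posSemidef_one_sub_mul_mul (hS : S.IsHermitian) (hSA : S * S = A) (hA : IsUnit A.det)
    (h : (A⁻¹ - P).PosSemidef) : (1 - S * P * S).PosSemidef := by
  have hc := h.mul_mul_conjTranspose_same S
  rwa [hS.eq, Matrix.mul_sub, Matrix.sub_mul, mul_inv_mul_eq_one_of_mul_self_eq hSA hA] at hc

theorem posSemidef_smul_one_sub_one_sub_mul_mul (hS : S.IsHermitian) (hSA : S * S = A)
    (hA : IsUnit A.det) {c : R} (h : (P - (1 - c) • A⁻¹).PosSemidef) :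
    (c • 1 - (1 - S * P * S)).PosSemidef := by
  have hc := h.mul_mul_conjTranspose_same S
  rw [hS.eq, Matrix.mul_sub, Matrix.sub_mul, Matrix.mul_smul, Matrix.smul_mul,
    mul_inv_mul_eq_one_of_mul_self_eq hSA hA] at hc
  convert hc using 1
  rw [sub_smul, one_smul]; abel

end Preconditioning

theorem enormSq_mulVec_of_mem_unitaryGroup {d : ℕ} {U : Matrix (Fin d) (Fin d) ℝ}
    (hU : U ∈ unitaryGroup (Fin d) ℝ) (v : Fin d → ℝ) : enormSq (U *ᵥ v) = enormSq v := by
  have hdot : ∀ w : Fin d → ℝ, enormSq w = w ⬝ᵥ w := fun w ↦ by simp [enormSq, dotProduct, sq]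
  rw [hdot, hdot, dotProduct_mulVec, ← mulVec_transpose, ← conjTranspose_eq_transpose_of_trivial,
    ← star_eq_conjTranspose, mulVec_mulVec, (mem_unitaryGroup_iff').1 hU, one_mulVec]

theorem enormSq_add_enormSq_le_of_recurrence {d : ℕ} {M : Matrix (Fin d) (Fin d) ℝ}
    (hM : M.IsHermitian) {α β r ρ : ℝ}
    (hdisc : ∀ i, (α * hM.eigenvalues i) ^ 2 ≤ 4 * (β * hM.eigenvalues i))
    (hq : ∀ i, β * hM.eigenvalues i ≤ r ^ 2) (hr : 0 ≤ r) (hrρ : r < ρ) (hρ : ρ ≤ 1)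
    {g : ℕ → Fin d → ℝ} (hg : ∀ k, g (k + 2) = M *ᵥ (α • g (k + 1) - β • g k)) (t : ℕ) :
    enormSq (g (t + 1)) + enormSq (g t) ≤
      (2 / (ρ - r) * ρ ^ t) ^ 2 * (enormSq (g 1) + enormSq (g 0)) := by
  set U := star (hM.eigenvectorUnitary : Matrix (Fin d) (Fin d) ℝ)
  have hU : U ∈ unitaryGroup (Fin d) ℝ := Unitary.star_mem hM.eigenvectorUnitary.2
  have hc : ∀ i k, (U *ᵥ g (k + 2)) i =
      α * hM.eigenvalues i * (U *ᵥ g (k + 1)) i - β * hM.eigenvalues i * (U *ᵥ g k) i := by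
    intro i k
    rw [hg, hM.star_eigenvectorUnitary_mulVec_mulVec, mulVec_diagonal]
    simp [mulVec_sub, mulVec_smul]
    ring
  simp only [← enormSq_mulVec_of_mem_unitaryGroup hU (g _)]
  simp only [enormSq, ← Finset.sum_add_distrib, Finset.mul_sum]
  exact Finset.sum_le_sum fun i _ ↦
    sq_add_sq_le_of_two_step_recurrence (a := fun k ↦ (U *ᵥ g k) i) (hdisc i) (hq i) hr hrρ hρ
      (hc i) t

theorem momentum_coefficients_le {π θ μ : ℝ} (hπ0 : 0 ≤ π) (hπ1 : π ≤ 1)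
    (hθ : θ = (1 - √(1 - π)) / (1 + √(1 - π))) (hμ0 : 0 ≤ μ) (hμπ : μ ≤ π) :
    ((1 + θ) * μ) ^ 2 ≤ 4 * (θ * μ) ∧ θ * μ ≤ (1 - √(1 - π)) ^ 2 := by
  set s := √(1 - π)
  have hs2 : s ^ 2 = 1 - π := Real.sq_sqrt (by linarith)
  have hs0 : 0 ≤ s := Real.sqrt_nonneg _
  have hs1 : s ≤ 1 := Real.sqrt_le_one.2 (by linarith)
  have hθ0 : 0 ≤ θ := hθ ▸ div_nonneg (by linarith) (by linarith)
  have h4θ : (1 + θ) ^ 2 * π = 4 * θ := by rw [hθ]; field_simp; nlinarith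
  have hθπ : θ * π = (1 - s) ^ 2 := by rw [hθ]; field_simp; nlinarith
  constructor
  · calc ((1 + θ) * μ) ^ 2 = (1 + θ) ^ 2 * μ * μ := by ring
      _ ≤ (1 + θ) ^ 2 * π * μ := by gcongr
      _ = 4 * (θ * μ) := by rw [h4θ]; ring
  · calc θ * μ ≤ θ * π := by gcongr
      _ = (1 - s) ^ 2 := hθπ

theorem accelerated_approximate_newton_quadratic_convergence_general (d : ℕ)
    (A : Matrix (Fin d) (Fin d) ℝ) (hA : A.PosDef)
    (b : Fin d → ℝ)
    (gradF : (Fin d → ℝ) → (Fin d → ℝ)) (hgrad : ∀ v, gradF v = A.mulVec v - b)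
    (π : ℝ) (hπ0 : 0 < π) (hπ1 : π < 1)
    (H : Matrix (Fin d) (Fin d) ℝ)
    (hup : (A⁻¹ - H⁻¹).PosSemidef)
    (hlow : (H⁻¹ - (1 - π) • A⁻¹).PosSemidef)
    (θ : ℝ) (hθ : θ = (1 - Real.sqrt (1 - π)) / (1 + Real.sqrt (1 - π)))
    (x : ℕ → Fin d → ℝ)
    (hrec : ∀ t : ℕ, 1 ≤ t →
      x (t + 1) = ((1 + θ) • x t - θ • x (t - 1)) -
        H⁻¹.mulVec (gradF ((1 + θ) • x t - θ • x (t - 1)))) :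
    ∀ ρ : ℝ, 1 - Real.sqrt (1 - π) < ρ → ρ < 1 →
      ∃ C : ℝ, 0 < C ∧ ∀ t : ℕ, 1 ≤ t →
        Real.sqrt
            (enormSq ((hA.posSemidef.sqrt)⁻¹.mulVec (gradF (x (t + 1)))) +
              enormSq ((hA.posSemidef.sqrt)⁻¹.mulVec (gradF (x t)))) ≤
          C * ρ ^ t *
            Real.sqrt
              (enormSq ((hA.posSemidef.sqrt)⁻¹.mulVec (gradF (x 1))) +
                enormSq ((hA.posSemidef.sqrt)⁻¹.mulVec (gradF (x 0)))) := by
  intro ρ hρ hρ1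
  set S := hA.posSemidef.sqrt
  have hSA : S * S = A := hA.posSemidef.sqrt_mul_self
  have hS : S.IsHermitian := hA.posSemidef.posSemidef_sqrt.1
  have hAdet : IsUnit A.det := (isUnit_iff_isUnit_det A).1 hA.isUnit
  have hM0 := posSemidef_one_sub_mul_mul hS hSA hAdet hup
  have hMπ := posSemidef_smul_one_sub_one_sub_mul_mul hS hSA hAdet hlow
  have hμ i := momentum_coefficients_le hπ0.le hπ1.le hθ (hM0.eigenvalues_nonneg i)
    (hM0.1.eigenvalues_le hMπ i)
  have hx : ∀ k, x (k + 2) = ((1 + θ) • x (k + 1) - θ • x k) -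
      H⁻¹ *ᵥ (A *ᵥ ((1 + θ) • x (k + 1) - θ • x k) - b) := fun k ↦ by
    simpa [hgrad] using hrec (k + 1) le_add_self
  set r := 1 - √(1 - π)
  have hr : 0 ≤ r := sub_nonneg.2 (Real.sqrt_le_one.2 (by linarith))
  have hC : 0 < 2 / (ρ - r) := div_pos two_pos (sub_pos.2 hρ)
  refine ⟨_, hC, fun t _ ↦ ?_⟩
  simp only [hgrad]
  have key := enormSq_add_enormSq_le_of_recurrence hM0.1 (fun i ↦ (hμ i).1) (fun i ↦ (hμ i).2)
    hr hρ hρ1.le (g := fun k ↦ S⁻¹ *ᵥ (A *ᵥ x k - b))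
    (preconditioned_residual_recurrence hSA hAdet b hx) t
  have hCρ : 0 ≤ 2 / (ρ - r) * ρ ^ t := mul_nonneg hC.le (pow_nonneg (hr.trans hρ.le) t)
  exact (Real.sqrt_le_sqrt key).trans_eq (by rw [Real.sqrt_mul (sq_nonneg _), Real.sqrt_sq hCρ])

/-- Accelerated approximate Newton on a quadratic `F(x) = (1/2)xᵀAx − bᵀx` with an
approximate Hessian `H` of quality `π` (i.e. `(1−π)A⁻¹ ⪯ H⁻¹ ⪯ A⁻¹`) and
`θ = (1 − √(1−π))/(1 + √(1−π))` converges linearly at any rate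
`ρ ∈ (1 − √(1−π), 1)` in the `A^{-1/2}`-transformed gradient norm. -/
theorem accelerated_approximate_newton_quadratic_convergence (d : ℕ)
    (A : Matrix (Fin d) (Fin d) ℝ) (hA : A.PosDef)
    (b : Fin d → ℝ)
    (gradF : (Fin d → ℝ) → (Fin d → ℝ)) (hgrad : ∀ v, gradF v = A.mulVec v - b)
    (π : ℝ) (hπ0 : 0 < π) (hπ1 : π < 1)
    (H : Matrix (Fin d) (Fin d) ℝ) (hH : H.PosDef) (hHsymm : H.IsHermitian)
    (hup : (A⁻¹ - H⁻¹).PosSemidef)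
    (hlow : (H⁻¹ - (1 - π) • A⁻¹).PosSemidef)
    (θ : ℝ) (hθ : θ = (1 - Real.sqrt (1 - π)) / (1 + Real.sqrt (1 - π)))
    (x : ℕ → Fin d → ℝ)
    (hrec : ∀ t : ℕ, 1 ≤ t →
      x (t + 1) = ((1 + θ) • x t - θ • x (t - 1)) -
        H⁻¹.mulVec (gradF ((1 + θ) • x t - θ • x (t - 1)))) :
    ∀ ρ : ℝ, 1 - Real.sqrt (1 - π) < ρ → ρ < 1 →
      ∃ C : ℝ, 0 < C ∧ ∀ t : ℕ, 1 ≤ t →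
        Real.sqrt
            (enormSq ((hA.posSemidef.sqrt)⁻¹.mulVec (gradF (x (t + 1)))) +
              enormSq ((hA.posSemidef.sqrt)⁻¹.mulVec (gradF (x t)))) ≤
          C * ρ ^ t *
            Real.sqrt
              (enormSq ((hA.posSemidef.sqrt)⁻¹.mulVec (gradF (x 1))) +
                enormSq ((hA.posSemidef.sqrt)⁻¹.mulVec (gradF (x 0)))) :=
  accelerated_approximate_newton_quadratic_convergence_general d A hA b gradF hgrad π hπ0 hπ1 H hup
    hlow θ hθ x hrec
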